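/- For any formula α of L∘: α is valid on the class of all transitive frames under the reflexive-insensitive semantics iff α is valid on the class of all reflexive transitive frames under the reflexive-insensitive semantics. -/
import Mathlib


/-- Formulas of the language L∘. -/
inductive RIForm : Type where
  | var : Nat → RIForm
  | neg : RIForm → RIForm
  | and : RIForm → RIForm → RIForm
  | circ : RIForm → RIForm
deriving DecidableEq

def RIForm.imp (φ ψ : RIForm) : RIForm := .neg (.and φ (.neg ψ))
def RIForm.or (φ ψ : RIForm) : RIForm := .neg (.and (.neg φ) (.neg ψ))
def RIForm.top : RIForm := .neg (.and (.var 0) (.neg (.var 0)))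
def RIForm.bot : RIForm := .and (.var 0) (.neg (.var 0))
def RIForm.iff (φ ψ : RIForm) : RIForm := .and (φ.imp ψ) (ψ.imp φ)

/-- Reflexive-insensitive satisfaction. -/
def riSat {W : Type} (R : W → W → Prop) (V : Nat → W → Prop) : W → RIForm → Prop
  | w, .var p => V p w
  | w, .neg φ => ¬ riSat R V w φ
  | w, .and φ ψ => riSat R V w φ ∧ riSat R V w ψ
  | w, .circ φ => ¬ riSat R V w φ ∨ ∀ x, R w x → riSat R V x φ

/-- Validity on a frame under the reflexive-insensitive semantics. -/
def riValid {W : Type} (R : W → W → Prop) (φ : RIForm) : Prop :=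
  ∀ V w, riSat R V w φ

lemma riSat_reflClosure {W : Type} (R : W → W → Prop) (V : Nat → W → Prop)
    (φ : RIForm) : ∀ w, riSat (fun x y => R x y ∨ x = y) V w φ ↔ riSat R V w φ := by
  induction φ with
  | var p => intro w; rfl
  | neg φ ih => intro w; simp [riSat, ih]
  | and φ ψ ih1 ih2 => intro w; simp [riSat, ih1, ih2]
  | circ φ ih =>
    intro w
    simp only [riSat, ih]
    constructor
    · rintro (h | h)
      · exact Or.inl h
      · exact Or.inr fun x hx => h x (Or.inl hx)
    · rintro (h | h)
      · exact Or.inl h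
      · by_cases hw : riSat R V w φ
        · refine Or.inr fun x hx => ?_
          rcases hx with hx | rfl
          · exact h x hx
          · exact hw
        · exact Or.inl hw

theorem valid_transitive_iff_valid_reflexive_transitive (α : RIForm) :
    (∀ (W : Type) (R : W → W → Prop), Transitive R → riValid R α) ↔
    (∀ (W : Type) (R : W → W → Prop), Reflexive R → Transitive R → riValid R α) := by
  constructor
  · intro h W R _hrefl htrans
    exact h W R htrans
  · intro h W R htrans V w
    have htrans' : Transitive (fun x y => R x y ∨ x = y) := by
      rintro a b c (hab | rfl) (hbc | rfl)
      · exact Or.inl (htrans hab hbc)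
      · exact Or.inl hab
      · exact Or.inl hbc
      · exact Or.inr rfl
    have hrefl' : Reflexive (fun x y => R x y ∨ x = y) := fun a => Or.inr rfl
    have := h W (fun x y => R x y ∨ x = y) hrefl' htrans' V w
    exact (riSat_reflClosure R V α w).mp this
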